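/- Let R be a zero-dimensional commutative ring. Then the space Prm(R) of primary ideals of R, with the coarse lower topology, is sober. -/

import Mathlib

/-- The coarse lower topology on the set of ideals of a commutative ring. -/
def coarseLowerTopology (R : Type*) [CommRing R] : TopologicalSpace (Ideal R) :=
  TopologicalSpace.generateFrom {U : Set (Ideal R) | ∃ a : Ideal R, U = {i : Ideal R | a ≤ i}ᶜ}

/-!
In the lower topology of a complete lattice, the infimum of an irreducible set `S` is a generic
point of its closure: a basic open set `(upperClosure t)ᶜ`, `t` finite, containing `sInf S` but
missing `S` would cover `S` by the closed sets `Ici a`, `a ∈ t`, so `S ⊆ Ici a` for one of them,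
i.e. `a ≤ sInf S`. It remains to see that `sInf S` is primary when `S` is an irreducible set of
primary ideals. In a zero-dimensional ring every `y` satisfies `y ^ (n + 1) * t = y ^ n`, so one
power `y ^ n` lies in every ideal whose radical contains `y`. If `x * y ∈ sInf S`, the closed sets
`Ici (span {x})` and `Ici (span {y ^ n})` cover `S`, and irreducibility puts `S` into one of them.
-/

open Set Topology TopologicalSpace

theorem quasiSober_of_forall_exists_isGenericPoint_mem {X : Type*} [TopologicalSpace X]
    {T : Set X} (h : ∀ S ⊆ T, IsIrreducible S → ∃ x ∈ T, IsGenericPoint x (closure S)) :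
    QuasiSober T where
  sober {S} hS hS_closed := by
    obtain ⟨x, hxT, hx⟩ := h (Subtype.val '' S) (by simp)
      (hS.image _ continuous_subtype_val.continuousOn)
    refine ⟨⟨x, hxT⟩, ?_⟩
    rw [isGenericPoint_def, IsInducing.subtypeVal.closure_eq_preimage_closure_image,
      image_singleton, hx.def, ← IsInducing.subtypeVal.closure_eq_preimage_closure_image,
      hS_closed.closure_eq]

namespace Topology.IsLower

variable {α : Type*} [TopologicalSpace α]

theorem exists_subset_Ici_of_subset_upperClosure [Preorder α] [IsLower α] {S : Set α}
    (hS : IsIrreducible S) {t : Finset α} (hSt : S ⊆ upperClosure (t : Set α)) :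
    ∃ a ∈ t, S ⊆ Ici a := by
  have hcover : S ⊆ ⋃₀ ↑(t.image Ici) := by
    simpa [coe_upperClosure, sUnion_image] using hSt
  obtain ⟨_, ha, hSa⟩ := isIrreducible_iff_sUnion_isClosed.mp hS _
    (by simpa using fun a _ => isClosed_Ici) hcover
  obtain ⟨a, hat, rfl⟩ := Finset.mem_image.mp ha
  exact ⟨a, hat, hSa⟩

variable [CompleteLattice α] [IsLower α] {S : Set α}

theorem sInf_mem_closure_of_isIrreducible (hS : IsIrreducible S) : sInf S ∈ closure S := by
  rw [IsLower.isTopologicalBasis.mem_closure_iff]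
  rintro _ ⟨t, ht, rfl⟩ hInf
  lift t to Finset α using ht
  rw [inter_comm, inter_compl_nonempty_iff]
  intro hSt
  obtain ⟨a, hat, hSa⟩ := exists_subset_Ici_of_subset_upperClosure hS hSt
  exact hInf (mem_upperClosure.mpr ⟨a, hat, le_sInf hSa⟩)

theorem isGenericPoint_sInf_of_isIrreducible (hS : IsIrreducible S) :
    IsGenericPoint (sInf S) (closure S) :=
  (closure_minimal (singleton_subset_iff.mpr (sInf_mem_closure_of_isIrreducible hS))
    isClosed_closure).antisymm
    (closure_minimal (fun _ hs => (closure_singleton (sInf S)).symm ▸ sInf_le hs)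
      isClosed_closure)

end Topology.IsLower

theorem coarseLowerTopology_eq_lower (R : Type*) [CommRing R] :
    coarseLowerTopology R = lower (Ideal R) := by
  unfold coarseLowerTopology lower
  congr 1
  ext U
  exact exists_congr fun _ => eq_comm

theorem isLower_coarseLowerTopology (R : Type*) [CommRing R] :
    letI := coarseLowerTopology R
    IsLower (Ideal R) :=
  letI := coarseLowerTopology R
  ⟨coarseLowerTopology_eq_lower R⟩

namespace Ideal

variable {R : Type*} [CommRing R]

theorem exists_pow_succ_mul_eq_pow [Ring.KrullDimLE 0 R] (y : R) :
    ∃ (n : ℕ) (t : R), y ^ (n + 1) * t = y ^ n := by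
  -- Otherwise a prime avoiding every `y ^ n * (1 - y * t)` is maximal and misses `y`,
  -- so it contains some `1 - y * t`.
  let M : Submonoid R :=
    { carrier := {x | ∃ (n : ℕ) (t : R), x = y ^ n * (1 - y * t)}
      mul_mem' := by
        rintro _ _ ⟨n, t, rfl⟩ ⟨m, s, rfl⟩
        exact ⟨n + m, t + s - y * t * s, by ring⟩
      one_mem' := ⟨0, 0, by ring⟩ }
  by_cases h0 : (0 : R) ∈ M
  · obtain ⟨n, t, ht⟩ := h0
    exact ⟨n, t, by linear_combination ht⟩
  obtain ⟨p, hp, -, hpM⟩ := exists_le_prime_disjoint ⊥ M (by simpa using h0)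
  have hyp : y ∉ p := fun hy => disjoint_left.mp hpM hy ⟨1, 0, by ring⟩
  obtain ⟨t, i, hi, hti⟩ := hp.isMaximal'.exists_inv hyp
  have hunit : 1 - y * t ∈ p := by
    rwa [show 1 - y * t = i by linear_combination -hti]
  exact (disjoint_left.mp hpM hunit ⟨0, t, by ring⟩).elim

theorem pow_mem_of_pow_succ_mul_eq_pow {I : Ideal R} {y t : R} {n : ℕ}
    (hnt : y ^ (n + 1) * t = y ^ n) (hy : y ∈ I.radical) : y ^ n ∈ I := by
  obtain ⟨m, hm⟩ := hy
  have hfix : ∀ k : ℕ, y ^ n * (y * t) ^ k = y ^ n := by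
    intro k
    induction k with
    | zero => simp
    | succ k ih => rw [pow_succ, ← mul_assoc, ih, ← mul_assoc, ← pow_succ, hnt]
  rw [← hfix m, mul_pow, mul_left_comm, ← mul_assoc]
  exact I.mul_mem_right _ (I.mul_mem_right _ hm)

theorem exists_pow_mem_of_mem_radical [Ring.KrullDimLE 0 R] (y : R) :
    ∃ n : ℕ, ∀ I : Ideal R, y ∈ I.radical → y ^ n ∈ I :=
  let ⟨n, _, hnt⟩ := exists_pow_succ_mul_eq_pow y
  ⟨n, fun _ => pow_mem_of_pow_succ_mul_eq_pow hnt⟩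

theorem isPrimary_sInf_of_isIrreducible [TopologicalSpace (Ideal R)] [IsLower (Ideal R)]
    [Ring.KrullDimLE 0 R] {S : Set (Ideal R)} (hS : IsIrreducible S)
    (hprimary : ∀ q ∈ S, q.IsPrimary) : (sInf S).IsPrimary := by
  obtain ⟨q₀, hq₀⟩ := hS.nonempty
  refine isPrimary_iff.mpr
    ⟨fun htop => (hprimary q₀ hq₀).ne_top (top_le_iff.mp (htop ▸ sInf_le hq₀)), ?_⟩
  intro x y hxy
  obtain ⟨n, hn⟩ := exists_pow_mem_of_mem_radical y
  have hcover : S ⊆ Ici (span {x}) ∪ Ici (span {y ^ n}) := fun q hq => by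
    simp only [mem_union, mem_Ici, span_singleton_le_iff_mem]
    exact ((isPrimary_iff.mp (hprimary q hq)).2 (sInf_le hq hxy)).imp_right (hn q)
  rcases isPreirreducible_iff_isClosed_union_isClosed.mp hS.isPreirreducible _ _
    isClosed_Ici isClosed_Ici hcover with hx | hy
  · exact Or.inl ((span_singleton_le_iff_mem _).mp (le_sInf hx))
  · exact Or.inr ⟨n, (span_singleton_le_iff_mem _).mp (le_sInf hy)⟩

end Ideal

/-- If `R` is zero-dimensional (every prime is maximal), the space of primary
ideals is sober. -/
theorem prm_sober_of_dim_zero {R : Type*} [CommRing R]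
    (hdim : ∀ p : Ideal R, p.IsPrime → p.IsMaximal) :
    letI := coarseLowerTopology R
    QuasiSober {a : Ideal R | a.IsPrimary} := by
  let := coarseLowerTopology R
  have := isLower_coarseLowerTopology R
  have := Ring.KrullDimLE.mk₀ hdim
  exact quasiSober_of_forall_exists_isGenericPoint_mem fun S hS hirr =>
    ⟨sInf S, Ideal.isPrimary_sInf_of_isIrreducible hirr hS,
      IsLower.isGenericPoint_sInf_of_isIrreducible hirr⟩
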